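/- Let (γ, ℓ, ℓ⁽²⁾, Y) be coordinate hypersurface data on U with inverse blocks (P, n, n⁽²⁾), derived fields F, U, K, Γ̊, Γ̄, and curvatures R̊, R̄ of Γ̊, Γ̄. Define the fields (I)_{bcd} := ℓ_aR̄^a_{bcd} + ℓ⁽²⁾(∇̄_dK_{bc} − ∇̄_cK_{bd}) + ½K_{bc}∂_dℓ⁽²⁾ − ½K_{bd}∂_cℓ⁽²⁾ and (II)_{abcd} := γ_{af}R̄^f_{bcd} − K_{bd}(∇̄_cℓ_a + ℓ⁽²⁾K_{ca}) + K_{bc}(∇̄_dℓ_a + ℓ⁽²⁾K_{da}) − ℓ_a(∇̄_cK_{bd} − ∇̄_dK_{bc}). Then: (1) (I)_{bcd} = ℓ_aR̊^a_{bcd} + ∇̊_dY_{bc} − ∇̊_cY_{bd} + ℓ⁽²⁾(∇̊_dU_{bc} − ∇̊_cU_{bd}) + ½(U_{bc}∂_dℓ⁽²⁾ − U_{bd}∂_cℓ⁽²⁾) + Y_{bd}((F_{cf} + Y_{cf})n^f + ½n⁽²⁾∂_cℓ⁽²⁾) − Y_{bc}((F_{df} + Y_{df})n^f + ½n⁽²⁾∂_dℓ⁽²⁾);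 (2) (II)_{abcd} = γ_{af}R̊^f_{bcd} + ℓ_a(∇̊_dU_{bc} − ∇̊_cU_{bd}) + Y_{bc}U_{da} − Y_{bd}U_{ca} + U_{bc}Y_{da} − U_{bd}Y_{ca} + n⁽²⁾(Y_{bc}Y_{da} − Y_{bd}Y_{ca}) + U_{bc}F_{da} − U_{bd}F_{ca}. -/

import Mathlib

/-!
Write `Γ̄ = Γ̊ − n ⊗ Y`. Because `Γ̊` is torsion-free, the curvature of `Γ̄` differs from that of
`Γ̊` by `−∇̊_c(n^a Y_db) + ∇̊_d(n^a Y_cb) + n^a (Y_db Y_cf − Y_cb Y_df) n^f`, and `∇̄` differs from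
`∇̊` by contractions with `n`. After contracting with `ℓ_a` or `γ_af`, everything reduces to
identities of the metric data that follow from the inverse-block relations and their derivatives:
`∇̊_c ℓ_a = F_ca − ℓ⁽²⁾ U_ca`, `ℓ_a ∇̊_c n^a = ∂_c(1 − n⁽²⁾ℓ⁽²⁾) − n^a ∇̊_c ℓ_a` and
`γ_af ∇̊_c n^f = U_ca − n⁽²⁾ F_ca − ℓ_a ∂_c n⁽²⁾ + ℓ_a U_cf n^f`. The remaining terms cancel by the
symmetry of `Y`, `U` and `Γ̊`.
-/

open scoped BigOperators

noncomputable section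

namespace HypData

variable {m : ℕ}

/-- Scalar field on ℝ^m. -/
abbrev Sc (m : ℕ) := (Fin m → ℝ) → ℝ
/-- One-index field. -/
abbrev Vec (m : ℕ) := (Fin m → ℝ) → Fin m → ℝ
/-- Two-index field. -/
abbrev Ten (m : ℕ) := (Fin m → ℝ) → Fin m → Fin m → ℝ
/-- Connection coefficients `Γ x c a b = Γ^c_{ab}` (first index upper). -/
abbrev Conn (m : ℕ) := (Fin m → ℝ) → Fin m → Fin m → Fin m → ℝ
/-- Three-index field. -/
abbrev Ten3 (m : ℕ) := (Fin m → ℝ) → Fin m → Fin m → Fin m → ℝ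

/-- Partial derivative of `f` in the `a`-th coordinate direction at `x`. -/
def pd (a : Fin m) (f : Sc m) (x : Fin m → ℝ) : ℝ :=
  fderiv ℝ f x (Pi.single a 1)

/-- Kronecker delta. -/
def kd (a b : Fin m) : ℝ := if a = b then 1 else 0

/-- Equations (EqP1)-(EqP4): `[[P,n],[nᵀ,n2]]` consists of the inverse blocks of
the block matrix `[[γ,ℓ],[ℓᵀ,ℓ2]]`. -/
def InvBlocks (γ : Fin m → Fin m → ℝ) (ℓ : Fin m → ℝ) (ℓ2 : ℝ)
    (P : Fin m → Fin m → ℝ) (n : Fin m → ℝ) (n2 : ℝ) : Prop :=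
  (∀ a b, (∑ c, P a c * γ c b) + n a * ℓ b = kd a b) ∧
  (∀ a, (∑ b, P a b * ℓ b) + ℓ2 * n a = 0) ∧
  ((∑ a, n a * ℓ a) + n2 * ℓ2 = 1) ∧
  (∀ a, (∑ b, γ a b * n b) + n2 * ℓ a = 0)

/-- ∇_a ω_b. -/
def covD1 (Γ : Conn m) (ω : Vec m) (x : Fin m → ℝ) (a b : Fin m) : ℝ :=
  pd a (fun y => ω y b) x - ∑ d, Γ x d a b * ω x d

/-- ∇_a X^b. -/
def covD1U (Γ : Conn m) (X : Vec m) (x : Fin m → ℝ) (a b : Fin m) : ℝ :=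
  pd a (fun y => X y b) x + ∑ d, Γ x b a d * X x d

/-- ∇_a T_{bc}. -/
def covD2 (Γ : Conn m) (T : Ten m) (x : Fin m → ℝ) (a b c : Fin m) : ℝ :=
  pd a (fun y => T y b c) x - (∑ d, Γ x d a b * T x d c) - (∑ d, Γ x d a c * T x b d)

/-- ∇_a T^{bc}. -/
def covD2U (Γ : Conn m) (T : Ten m) (x : Fin m → ℝ) (a b c : Fin m) : ℝ :=
  pd a (fun y => T y b c) x + (∑ d, Γ x b a d * T x d c) + (∑ d, Γ x c a d * T x b d)

/-- ∇_a S^b_c (first index of `S` upper, second lower). -/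
def covD11 (Γ : Conn m) (S : Ten m) (x : Fin m → ℝ) (a b c : Fin m) : ℝ :=
  pd a (fun y => S y b c) x + (∑ d, Γ x b a d * S x d c) - (∑ d, Γ x d a c * S x b d)

/-- ∇_a Q^{bcd}. -/
def covD3U (Γ : Conn m) (Q : Ten3 m) (x : Fin m → ℝ) (a b c d : Fin m) : ℝ :=
  pd a (fun y => Q y b c d) x + (∑ f, Γ x b a f * Q x f c d)
    + (∑ f, Γ x c a f * Q x b f d) + (∑ f, Γ x d a f * Q x b c f)

/-- Curvature `R^a_{bcd} = ∂_cΓ^a_{db} − ∂_dΓ^a_{cb} + Γ^a_{cf}Γ^f_{db} − Γ^a_{df}Γ^f_{cb}`. -/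
def curv (Γ : Conn m) (x : Fin m → ℝ) (a b c d : Fin m) : ℝ :=
  pd c (fun y => Γ y a d b) x - pd d (fun y => Γ y a c b) x
    + (∑ f, Γ x a c f * Γ x f d b) - (∑ f, Γ x a d f * Γ x f c b)

/-- `F_{ab} = ½(∂_aℓ_b − ∂_bℓ_a)`. -/
def Ff (ℓ : Vec m) (x : Fin m → ℝ) (a b : Fin m) : ℝ :=
  (pd a (fun y => ℓ y b) x - pd b (fun y => ℓ y a) x) / 2

/-- `U_{ab} = ½(n^c∂_cγ_{ab} + γ_{cb}∂_an^c + γ_{ac}∂_bn^c + ℓ_a∂_bn⁽²⁾ + ℓ_b∂_an⁽²⁾)`. -/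
def Uf (γ : Ten m) (ℓ : Vec m) (n : Vec m) (n2 : Sc m)
    (x : Fin m → ℝ) (a b : Fin m) : ℝ :=
  ((∑ c, (n x c * pd c (fun y => γ y a b) x + γ x c b * pd a (fun y => n y c) x
      + γ x a c * pd b (fun y => n y c) x))
    + ℓ x a * pd b n2 x + ℓ x b * pd a n2 x) / 2

/-- Metric hypersurface connection `Γ̊^c_{ab}`. -/
def Gam0 (γ : Ten m) (ℓ : Vec m) (P : Ten m) (n : Vec m)
    (x : Fin m → ℝ) (c a b : Fin m) : ℝ :=
  (∑ d, P x c d * (pd a (fun y => γ y b d) x + pd b (fun y => γ y a d) x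
      - pd d (fun y => γ y a b) x)) / 2
  + n x c * (pd a (fun y => ℓ y b) x + pd b (fun y => ℓ y a) x) / 2

/-- The connection `Γ̄^c_{ab} = Γ̊^c_{ab} − n^c Y_{ab}`. -/
def GamB (γ : Ten m) (ℓ : Vec m) (P : Ten m) (n : Vec m) (Y : Ten m)
    (x : Fin m → ℝ) (c a b : Fin m) : ℝ :=
  Gam0 γ ℓ P n x c a b - n x c * Y x a b

/-- `K_{ab} = n⁽²⁾Y_{ab} + U_{ab}`. -/
def Kf (γ : Ten m) (ℓ : Vec m) (n : Vec m) (n2 : Sc m) (Y : Ten m)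
    (x : Fin m → ℝ) (a b : Fin m) : ℝ :=
  n2 x * Y x a b + Uf γ ℓ n n2 x a b

/-- `φ_a = ½n⁽²⁾∂_aℓ⁽²⁾ + n^b(Y_{ab} + F_{ab})`. -/
def phif (ℓ : Vec m) (ℓ2 : Sc m) (n : Vec m) (n2 : Sc m) (Y : Ten m)
    (x : Fin m → ℝ) (a : Fin m) : ℝ :=
  n2 x * pd a ℓ2 x / 2 + ∑ b, n x b * (Y x a b + Ff ℓ x a b)

/-- `Ψ^b_a = P^{bc}(Y_{ac} + F_{ac}) + ½n^b∂_aℓ⁽²⁾`. -/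
def Psif (ℓ : Vec m) (ℓ2 : Sc m) (P : Ten m) (n : Vec m) (Y : Ten m)
    (x : Fin m → ℝ) (b a : Fin m) : ℝ :=
  (∑ c, P x b c * (Y x a c + Ff ℓ x a c)) + n x b * pd a ℓ2 x / 2

/-- Smoothness of a scalar field on `U`. -/
def SmSc (U : Set (Fin m → ℝ)) (f : Sc m) : Prop := ContDiffOn ℝ (⊤ : ℕ∞) f U
/-- Smoothness of a one-index field on `U`. -/
def SmVec (U : Set (Fin m → ℝ)) (f : Vec m) : Prop :=
  ∀ a, ContDiffOn ℝ (⊤ : ℕ∞) (fun x => f x a) U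
/-- Smoothness of a two-index field on `U`. -/
def SmTen (U : Set (Fin m → ℝ)) (f : Ten m) : Prop :=
  ∀ a b, ContDiffOn ℝ (⊤ : ℕ∞) (fun x => f x a b) U

/-- Smooth coordinate hypersurface metric data on `U`. -/
def MetricData (U : Set (Fin m → ℝ)) (γ : Ten m) (ℓ : Vec m) (ℓ2 : Sc m)
    (P : Ten m) (n : Vec m) (n2 : Sc m) : Prop :=
  SmTen U γ ∧ SmVec U ℓ ∧ SmSc U ℓ2 ∧ SmTen U P ∧ SmVec U n ∧ SmSc U n2 ∧
  (∀ x ∈ U, ∀ a b, γ x a b = γ x b a) ∧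
  (∀ x ∈ U, ∀ a b, P x a b = P x b a) ∧
  (∀ x ∈ U, InvBlocks (γ x) (ℓ x) (ℓ2 x) (P x) (n x) (n2 x))

/-- Gauge-transformed `ℓ`. -/
def gaugeL (γ : Ten m) (ℓ : Vec m) (u : Sc m) (V : Vec m) : Vec m :=
  fun x a => u x * (ℓ x a + ∑ b, V x b * γ x a b)

/-- Gauge-transformed `ℓ⁽²⁾`. -/
def gaugeL2 (γ : Ten m) (ℓ : Vec m) (ℓ2 : Sc m) (u : Sc m) (V : Vec m) : Sc m :=
  fun x => u x ^ 2 * (ℓ2 x + 2 * (∑ a, V x a * ℓ x a) + ∑ a, ∑ b, V x a * V x b * γ x a b)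

/-- Gauge-transformed `Y`. -/
def gaugeY (γ : Ten m) (ℓ : Vec m) (Y : Ten m) (u : Sc m) (V : Vec m) : Ten m :=
  fun x a b => u x * Y x a b + (ℓ x a * pd b u x + ℓ x b * pd a u x) / 2
    + ((u x * ∑ c, V x c * pd c (fun y => γ y a b) x)
      + (∑ c, γ x c b * pd a (fun y => u y * V y c) x)
      + (∑ c, γ x a c * pd b (fun y => u y * V y c) x)) / 2

/-- Gauge-transformed `P`. -/
def gaugeP (P : Ten m) (n : Vec m) (n2 : Sc m) (V : Vec m) : Ten m :=
  fun x a b => P x a b + n2 x * V x a * V x b - V x a * n x b - V x b * n x a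

/-- Gauge-transformed `n`. -/
def gaugeN (n : Vec m) (n2 : Sc m) (u : Sc m) (V : Vec m) : Vec m :=
  fun x a => (u x)⁻¹ * (n x a - n2 x * V x a)

/-- Gauge-transformed `n⁽²⁾`. -/
def gaugeN2 (n2 : Sc m) (u : Sc m) : Sc m :=
  fun x => ((u x) ^ 2)⁻¹ * n2 x

/-- Shell energy-momentum tensor `τ^{fa}` built pointwise from the jump `V_{ab}`. -/
def tauP (P : Fin m → Fin m → ℝ) (n : Fin m → ℝ) (n2 : ℝ) (V : Fin m → Fin m → ℝ)
    (f a : Fin m) : ℝ :=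
  (∑ c, ∑ d, (n f * P a c + n a * P f c) * n d * V c d)
  - (∑ c, ∑ d, (n2 * P f c * P a d + P f a * n c * n d) * V c d)
  + (n2 * P f a - n f * n a) * (∑ c, ∑ d, P c d * V c d)

/-- `τ^f_c = −(n⁽²⁾P^{bd} − n^bn^d)(δ^f_dV_{bc} − δ^f_cV_{bd})`. -/
def tauMixP (P : Fin m → Fin m → ℝ) (n : Fin m → ℝ) (n2 : ℝ)
    (V : Fin m → Fin m → ℝ) (f c : Fin m) : ℝ :=
  -(∑ b, ∑ d, (n2 * P b d - n b * n d) * (kd f d * V b c - kd f c * V b d))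

/-- `T^f = (P^{bf}n^c − P^{bc}n^f)V_{bc}`. -/
def tauVecP (P : Fin m → Fin m → ℝ) (n : Fin m → ℝ) (V : Fin m → Fin m → ℝ)
    (f : Fin m) : ℝ :=
  ∑ b, ∑ c, (P b f * n c - P b c * n f) * V b c

/-- The block matrix 𝔸. -/
def blockA (γ : Ten m) (ℓ : Vec m) (ℓ2 : Sc m) (x : Fin m → ℝ) :
    Matrix (Fin m ⊕ Unit) (Fin m ⊕ Unit) ℝ :=
  fun i j =>
    match i, j with
    | Sum.inl a, Sum.inl b => γ x a b
    | Sum.inl a, Sum.inr _ => ℓ x a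
    | Sum.inr _, Sum.inl b => ℓ x b
    | Sum.inr _, Sum.inr _ => ℓ2 x

/-- `det 𝔸` as a scalar field. -/
def detA (γ : Ten m) (ℓ : Vec m) (ℓ2 : Sc m) (x : Fin m → ℝ) : ℝ :=
  (blockA γ ℓ ℓ2 x).det

end HypData

namespace HypData

variable {m : ℕ} {U : Set (Fin m → ℝ)} {x : Fin m → ℝ}

theorem pd_congr_of_eqOn (hU : IsOpen U) (hx : x ∈ U) {f g : Sc m} (h : Set.EqOn f g U)
    (a : Fin m) : pd a f x = pd a g x := by
  rw [pd, pd, (Filter.eventuallyEq_of_mem (hU.mem_nhds hx) h).fderiv_eq]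

theorem pd_symm (hU : IsOpen U) (hx : x ∈ U) {T : Ten m}
    (hT : ∀ y ∈ U, ∀ i j, T y i j = T y j i) (a i j : Fin m) :
    pd a (fun y => T y i j) x = pd a (fun y => T y j i) x :=
  pd_congr_of_eqOn hU hx (fun y hy => hT y hy i j) a

theorem pd_const (a : Fin m) (c : ℝ) : pd a (fun _ => c) x = 0 := by
  simp [pd]

theorem pd_add {f g : Sc m} (hf : DifferentiableAt ℝ f x) (hg : DifferentiableAt ℝ g x)
    (a : Fin m) : pd a (fun y => f y + g y) x = pd a f x + pd a g x := by
  simp [pd, fderiv_fun_add hf hg]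

theorem pd_sub {f g : Sc m} (hf : DifferentiableAt ℝ f x) (hg : DifferentiableAt ℝ g x)
    (a : Fin m) : pd a (fun y => f y - g y) x = pd a f x - pd a g x := by
  simp [pd, fderiv_fun_sub hf hg]

theorem pd_mul {f g : Sc m} (hf : DifferentiableAt ℝ f x) (hg : DifferentiableAt ℝ g x)
    (a : Fin m) : pd a (fun y => f y * g y) x = pd a f x * g x + f x * pd a g x := by
  simp [pd, fderiv_fun_mul hf hg]
  ring

theorem pd_sum_mul {ω X : Vec m} (hω : ∀ i, DifferentiableAt ℝ (fun y => ω y i) x)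
    (hX : ∀ i, DifferentiableAt ℝ (fun y => X y i) x) (a : Fin m) :
    pd a (fun y => ∑ i, ω y i * X y i) x
      = ∑ i, (pd a (fun y => ω y i) x * X x i + ω x i * pd a (fun y => X y i) x) := by
  simp only [pd, fderiv_fun_sum fun i _ => (hω i).fun_mul (hX i), FunLike.coe_sum,
    Finset.sum_apply]
  exact Finset.sum_congr rfl fun i _ => pd_mul (hω i) (hX i) a

theorem SmSc.differentiableAt (hU : IsOpen U) {f : Sc m} (hf : SmSc U f) (hx : x ∈ U) :
    DifferentiableAt ℝ f x :=
  (hf.contDiffAt (hU.mem_nhds hx)).differentiableAt (by simp)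

theorem smSc_pd (hU : IsOpen U) {f : Sc m} (hf : SmSc U f) (a : Fin m) : SmSc U (pd a f) :=
  (hf.fderiv_of_isOpen hU (by simp)).clm_apply contDiffOn_const

section Connection

variable {Γ Γ' : Conn m} {n : Vec m} {Y : Ten m}

theorem covD1_sub_mul (hΓ' : ∀ k i j, Γ' x k i j = Γ x k i j - n x k * Y x i j)
    (ω : Vec m) (c a : Fin m) :
    covD1 Γ' ω x c a = covD1 Γ ω x c a + Y x c a * ∑ k, ω x k * n x k := by
  simp only [covD1, hΓ', sub_mul, Finset.sum_sub_distrib, Finset.mul_sum]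
  simp only [mul_comm, mul_left_comm]
  ring

theorem covD2_sub_mul (hΓ' : ∀ k i j, Γ' x k i j = Γ x k i j - n x k * Y x i j)
    (T : Ten m) (d b c : Fin m) :
    covD2 Γ' T x d b c
      = covD2 Γ T x d b c + Y x d b * ∑ k, T x k c * n x k + Y x d c * ∑ k, T x b k * n x k := by
  simp only [covD2, hΓ', sub_mul, Finset.sum_sub_distrib, Finset.mul_sum]
  simp only [mul_comm, mul_left_comm]
  ring

theorem covD2_symm (hU : IsOpen U) (hx : x ∈ U) {T : Ten m}
    (hT : ∀ y ∈ U, ∀ i j, T y i j = T y j i) (d b c : Fin m) :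
    covD2 Γ T x d b c = covD2 Γ T x d c b := by
  simp only [covD2, pd_symm hU hx hT d b c, hT x hx _ c, hT x hx b]
  ring

theorem covD2_mul_add {K T S : Ten m} {s : Sc m}
    (hK : ∀ y i j, K y i j = s y * T y i j + S y i j) {b c : Fin m}
    (hs : DifferentiableAt ℝ s x) (hT : DifferentiableAt ℝ (fun y => T y b c) x)
    (hS : DifferentiableAt ℝ (fun y => S y b c) x) (d : Fin m) :
    covD2 Γ K x d b c = pd d s x * T x b c + s x * covD2 Γ T x d b c + covD2 Γ S x d b c := by
  have hpd : pd d (fun y => K y b c) x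
      = pd d s x * T x b c + s x * pd d (fun y => T y b c) x + pd d (fun y => S y b c) x := by
    simp only [hK]
    rw [pd_add (hs.fun_mul hT) hS, pd_mul hs hT]
  rw [covD2, covD2, covD2, hpd]
  simp only [hK, mul_add, mul_sub, Finset.sum_add_distrib, Finset.mul_sum]
  simp only [mul_comm, mul_left_comm]
  ring

theorem sum_mul_covD1U {ω X : Vec m} (hω : ∀ i, DifferentiableAt ℝ (fun y => ω y i) x)
    (hX : ∀ i, DifferentiableAt ℝ (fun y => X y i) x) (c : Fin m) :
    ∑ i, ω x i * covD1U Γ X x c i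
      = pd c (fun y => ∑ i, ω y i * X y i) x - ∑ i, X x i * covD1 Γ ω x c i := by
  have hswap : ∑ i, ω x i * ∑ k, Γ x i c k * X x k = ∑ i, X x i * ∑ k, Γ x k c i * ω x k := by
    simp only [Finset.mul_sum]
    rw [Finset.sum_comm]
    exact Finset.sum_congr rfl fun _ _ => Finset.sum_congr rfl fun _ _ => by ring
  simp only [covD1U, covD1, pd_sum_mul hω hX, mul_add, mul_sub, Finset.sum_add_distrib,
    Finset.sum_sub_distrib, hswap]
  simp only [mul_comm]
  ring

theorem curv_sub_mul (hΓ' : ∀ y k i j, Γ' y k i j = Γ y k i j - n y k * Y y i j)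
    (hΓ : ∀ k i j, Γ x k i j = Γ x k j i)
    (hΓd : ∀ k i j, DifferentiableAt ℝ (fun y => Γ y k i j) x)
    (hn : ∀ k, DifferentiableAt ℝ (fun y => n y k) x)
    (hY : ∀ i j, DifferentiableAt ℝ (fun y => Y y i j) x) (a b c d : Fin m) :
    curv Γ' x a b c d
      = curv Γ x a b c d
        - (covD1U Γ n x c a * Y x d b + n x a * covD2 Γ Y x c d b)
        + (covD1U Γ n x d a * Y x c b + n x a * covD2 Γ Y x d c b)
        + n x a * (Y x d b * ∑ f, Y x c f * n x f - Y x c b * ∑ f, Y x d f * n x f) := by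
  have hpd (e i j : Fin m) : pd e (fun y => Γ' y a i j) x
      = pd e (fun y => Γ y a i j) x
        - (pd e (fun y => n y a) x * Y x i j + n x a * pd e (fun y => Y y i j) x) := by
    simp only [hΓ']
    rw [pd_sub (hΓd a i j) ((hn a).fun_mul (hY i j)), pd_mul (hn a) (hY i j)]
  have htorsion : ∑ k, Γ x k d c * Y x k b = ∑ k, Γ x k c d * Y x k b := by
    simp only [hΓ _ d c]
  simp only [curv, hpd]
  simp only [covD1U, covD2, htorsion, hΓ', sub_mul, add_mul, mul_sub, Finset.sum_sub_distrib,
    Finset.mul_sum, Finset.sum_mul]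
  simp only [mul_comm, mul_left_comm]
  ring

theorem sum_mul_curv_sub_mul (hΓ' : ∀ y k i j, Γ' y k i j = Γ y k i j - n y k * Y y i j)
    (hΓ : ∀ k i j, Γ x k i j = Γ x k j i)
    (hΓd : ∀ k i j, DifferentiableAt ℝ (fun y => Γ y k i j) x)
    (hn : ∀ k, DifferentiableAt ℝ (fun y => n y k) x)
    (hY : ∀ i j, DifferentiableAt ℝ (fun y => Y y i j) x) (ω : Fin m → ℝ) (b c d : Fin m) :
    ∑ a, ω a * curv Γ' x a b c d
      = ∑ a, ω a * curv Γ x a b c d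
        - (∑ a, ω a * covD1U Γ n x c a) * Y x d b + (∑ a, ω a * covD1U Γ n x d a) * Y x c b
        + (∑ a, ω a * n x a) * (covD2 Γ Y x d c b - covD2 Γ Y x c d b
          + Y x d b * ∑ f, Y x c f * n x f - Y x c b * ∑ f, Y x d f * n x f) := by
  simp only [curv_sub_mul hΓ' hΓ hΓd hn hY, mul_add, mul_sub, Finset.sum_add_distrib,
    Finset.sum_sub_distrib, Finset.sum_mul]
  simp only [mul_assoc, mul_comm, mul_left_comm]
  ring

end Connection

variable {γ : Ten m} {ℓ : Vec m} {ℓ2 : Sc m} {P : Ten m} {n : Vec m} {n2 : Sc m}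

theorem smSc_Gam0 (hU : IsOpen U) (hγ : SmTen U γ) (hℓ : SmVec U ℓ) (hP : SmTen U P)
    (hn : SmVec U n) (c a b : Fin m) : SmSc U (fun y => Gam0 γ ℓ P n y c a b) := by
  have dγ (e i j : Fin m) := smSc_pd hU (hγ i j) e
  have dℓ (e i : Fin m) := smSc_pd hU (hℓ i) e
  unfold SmSc SmTen SmVec at *
  unfold Gam0
  fun_prop

theorem smSc_Uf (hU : IsOpen U) (hγ : SmTen U γ) (hℓ : SmVec U ℓ) (hn : SmVec U n)
    (hn2 : SmSc U n2) (a b : Fin m) : SmSc U (fun y => Uf γ ℓ n n2 y a b) := by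
  have dγ (e i j : Fin m) := smSc_pd hU (hγ i j) e
  have dn (e i : Fin m) := smSc_pd hU (hn i) e
  have dn2 (e : Fin m) := smSc_pd hU hn2 e
  unfold SmSc SmTen SmVec at *
  change (Fin m → ℝ) → ℝ at n2
  unfold Uf
  fun_prop

theorem Gam0_symm (hU : IsOpen U) (hγs : ∀ y ∈ U, ∀ i j, γ y i j = γ y j i) (hx : x ∈ U)
    (k a b : Fin m) : Gam0 γ ℓ P n x k a b = Gam0 γ ℓ P n x k b a := by
  simp only [Gam0, pd_symm hU hx hγs _ a b, add_comm (pd a _ x)]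

theorem sum_Gam0_mul (ω : Fin m → ℝ) (c a : Fin m) :
    ∑ k, Gam0 γ ℓ P n x k c a * ω k
      = (∑ d, (∑ k, ω k * P x k d) * (pd c (fun y => γ y a d) x + pd a (fun y => γ y c d) x
          - pd d (fun y => γ y c a) x)) / 2
        + (∑ k, ω k * n x k) * (pd c (fun y => ℓ y a) x + pd a (fun y => ℓ y c) x) / 2 := by
  simp only [Gam0, add_mul, Finset.sum_add_distrib, Finset.sum_div, Finset.sum_mul]
  rw [Finset.sum_comm (s := Finset.univ) (t := Finset.univ)]
  simp only [div_eq_mul_inv, mul_assoc, mul_comm, mul_left_comm]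

namespace MetricData

theorem sum_ℓ_mul_n (hd : MetricData U γ ℓ ℓ2 P n n2) (hx : x ∈ U) :
    ∑ a, ℓ x a * n x a = 1 - n2 x * ℓ2 x := by
  obtain ⟨-, -, -, -, -, -, -, -, hinv⟩ := hd
  have h := (hinv x hx).2.2.1
  simp only [mul_comm (n x _)] at h
  linarith

theorem sum_γ_mul_n (hd : MetricData U γ ℓ ℓ2 P n n2) (hx : x ∈ U) (a : Fin m) :
    ∑ c, γ x a c * n x c = -(n2 x * ℓ x a) := by
  obtain ⟨-, -, -, -, -, -, -, -, hinv⟩ := hd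
  linarith [(hinv x hx).2.2.2 a]

theorem sum_ℓ_mul_P (hd : MetricData U γ ℓ ℓ2 P n n2) (hx : x ∈ U) (d : Fin m) :
    ∑ a, ℓ x a * P x a d = -(ℓ2 x * n x d) := by
  obtain ⟨-, -, -, -, -, -, -, hPs, hinv⟩ := hd
  have h := (hinv x hx).2.1 d
  simp only [hPs x hx d, mul_comm (P x _ d)] at h
  linarith

theorem sum_γ_mul_P (hd : MetricData U γ ℓ ℓ2 P n n2) (hx : x ∈ U) (b d : Fin m) :
    ∑ k, γ x k b * P x k d = kd d b - n x d * ℓ x b := by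
  obtain ⟨-, -, -, -, -, -, -, hPs, hinv⟩ := hd
  have h := (hinv x hx).1 d b
  simp only [hPs x hx d, mul_comm (P x _ d)] at h
  linarith

theorem sum_γ_mul_pd_n (hd : MetricData U γ ℓ ℓ2 P n n2) (hU : IsOpen U) (hx : x ∈ U)
    (e a : Fin m) :
    ∑ c, γ x a c * pd e (fun y => n y c) x
      = -(∑ c, n x c * pd e (fun y => γ y a c) x)
        - (pd e n2 x * ℓ x a + n2 x * pd e (fun y => ℓ y a) x) := by
  obtain ⟨hγ, hℓ, -, -, hn, hn2, -, -, hinv⟩ := hd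
  have dγ (i j : Fin m) := SmSc.differentiableAt hU (hγ i j) hx
  have dn (i : Fin m) := SmSc.differentiableAt hU (hn i) hx
  have dℓ := SmSc.differentiableAt hU (hℓ a) hx
  have dn2 := SmSc.differentiableAt hU hn2 hx
  have h0 : pd e (fun y => (∑ c, γ y a c * n y c) + n2 y * ℓ y a) x = 0 := by
    rw [pd_congr_of_eqOn hU hx (fun y hy => (hinv y hy).2.2.2 a), pd_const]
  rw [pd_add (.fun_sum fun c _ => (dγ a c).fun_mul (dn c)) (dn2.fun_mul dℓ),
    pd_sum_mul (ω := fun y c => γ y a c) (dγ a) dn, pd_mul dn2 dℓ,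
    Finset.sum_add_distrib] at h0
  simp only [mul_comm (n x _)]
  linarith

-- Differentiating `γ_ac n^c = −n⁽²⁾ ℓ_a` removes the derivatives of `n` and `n⁽²⁾` from `U`.
theorem Uf_eq (hd : MetricData U γ ℓ ℓ2 P n n2) (hU : IsOpen U) (hx : x ∈ U) (a b : Fin m) :
    Uf γ ℓ n n2 x a b
      = -((∑ c, n x c * (pd a (fun y => γ y b c) x + pd b (fun y => γ y a c) x
          - pd c (fun y => γ y a b) x))
        + n2 x * (pd a (fun y => ℓ y b) x + pd b (fun y => ℓ y a) x)) / 2 := by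
  have ⟨_, _, _, _, _, _, hγs, _⟩ := hd
  have hγb : ∑ c, γ x c b * pd a (fun y => n y c) x = ∑ c, γ x b c * pd a (fun y => n y c) x := by
    simp only [hγs x hx _ b]
  simp only [Uf, Finset.sum_add_distrib, mul_add, mul_sub, Finset.sum_sub_distrib, hγb]
  rw [hd.sum_γ_mul_pd_n hU hx a b, hd.sum_γ_mul_pd_n hU hx b a]
  ring

theorem Uf_symm (hd : MetricData U γ ℓ ℓ2 P n n2) (hU : IsOpen U) (hx : x ∈ U) (a b : Fin m) :
    Uf γ ℓ n n2 x a b = Uf γ ℓ n n2 x b a := by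
  have ⟨_, _, _, _, _, _, hγs, _⟩ := hd
  simp only [hd.Uf_eq hU hx, pd_symm hU hx hγs _ a b, add_comm (pd a _ x)]

theorem covD1_Gam0_ℓ (hd : MetricData U γ ℓ ℓ2 P n n2) (hU : IsOpen U) (hx : x ∈ U)
    (c a : Fin m) : covD1 (Gam0 γ ℓ P n) ℓ x c a = Ff ℓ x c a - ℓ2 x * Uf γ ℓ n n2 x c a := by
  simp only [covD1, sum_Gam0_mul, hd.sum_ℓ_mul_P hx, hd.sum_ℓ_mul_n hx, neg_mul, mul_assoc,
    Finset.sum_neg_distrib, ← Finset.mul_sum, hd.Uf_eq hU hx, Ff]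
  ring

theorem sum_Gam0_mul_γ (hd : MetricData U γ ℓ ℓ2 P n n2) (hU : IsOpen U) (hx : x ∈ U)
    (c k a : Fin m) :
    ∑ f, Gam0 γ ℓ P n x f c k * γ x f a
      = (pd c (fun y => γ y k a) x + pd k (fun y => γ y c a) x - pd a (fun y => γ y c k) x) / 2
        + ℓ x a * Uf γ ℓ n n2 x c k := by
  have ⟨_, _, _, _, _, _, hγs, _⟩ := hd
  have hγn : ∑ f, γ x f a * n x f = -(n2 x * ℓ x a) := by
    simp only [hγs x hx _ a, hd.sum_γ_mul_n hx]
  simp only [sum_Gam0_mul, hd.sum_γ_mul_P hx, hγn, sub_mul, Finset.sum_sub_distrib, kd, ite_mul,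
    one_mul, zero_mul, Finset.sum_ite_eq', Finset.mem_univ, if_true]
  rw [hd.Uf_eq hU hx c k]
  -- Expand every sum into sums of monomials with sorted factors, so that `ring` sees equal atoms.
  simp only [neg_mul, mul_neg, Finset.mul_sum, Finset.sum_div, mul_add, mul_sub, add_div, sub_div,
    neg_div, mul_div_assoc', Finset.sum_add_distrib, Finset.sum_sub_distrib]
  simp only [mul_assoc, mul_comm]
  simp only [← Finset.sum_div, ← Finset.mul_sum]
  ring

theorem sum_ℓ_mul_covD1U_Gam0_n (hd : MetricData U γ ℓ ℓ2 P n n2) (hU : IsOpen U) (hx : x ∈ U)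
    (c : Fin m) :
    ∑ a, ℓ x a * covD1U (Gam0 γ ℓ P n) n x c a
      = -(pd c n2 x * ℓ2 x + n2 x * pd c ℓ2 x) - ∑ a, Ff ℓ x c a * n x a
        + ℓ2 x * ∑ a, Uf γ ℓ n n2 x c a * n x a := by
  have ⟨_, hℓ, hℓ2, _, hn, hn2, _⟩ := hd
  have dn2 := SmSc.differentiableAt hU hn2 hx
  have dℓ2 := SmSc.differentiableAt hU hℓ2 hx
  rw [sum_mul_covD1U (fun i => SmSc.differentiableAt hU (hℓ i) hx)
      (fun i => SmSc.differentiableAt hU (hn i) hx),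
    pd_congr_of_eqOn hU hx (fun y hy => hd.sum_ℓ_mul_n hy),
    pd_sub (differentiableAt_const _) (dn2.fun_mul dℓ2), pd_const, pd_mul dn2 dℓ2]
  simp only [hd.covD1_Gam0_ℓ hU hx, mul_comm (n x _), sub_mul, Finset.sum_sub_distrib, mul_assoc,
    ← Finset.mul_sum]
  ring

theorem sum_γ_mul_covD1U_Gam0_n (hd : MetricData U γ ℓ ℓ2 P n n2) (hU : IsOpen U) (hx : x ∈ U)
    (a c : Fin m) :
    ∑ f, γ x a f * covD1U (Gam0 γ ℓ P n) n x c f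
      = Uf γ ℓ n n2 x c a - n2 x * Ff ℓ x c a - pd c n2 x * ℓ x a
        + ℓ x a * ∑ k, Uf γ ℓ n n2 x c k * n x k := by
  have ⟨_, _, _, _, _, _, hγs, _⟩ := hd
  have hswap : ∑ f, γ x a f * ∑ k, Gam0 γ ℓ P n x f c k * n x k
      = ∑ k, (∑ f, Gam0 γ ℓ P n x f c k * γ x f a) * n x k := by
    simp only [Finset.mul_sum, Finset.sum_mul, hγs x hx a]
    rw [Finset.sum_comm]
    simp only [mul_comm, mul_left_comm]
  have hpdγ (k : Fin m) : pd c (fun y => γ y k a) x = pd c (fun y => γ y a k) x :=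
    pd_symm hU hx hγs c k a
  simp only [covD1U, mul_add, Finset.sum_add_distrib, hswap, hd.sum_γ_mul_pd_n hU hx,
    hd.sum_Gam0_mul_γ hU hx, hpdγ, hd.Uf_eq hU hx c a, Ff]
  simp only [Finset.mul_sum, Finset.sum_div, mul_add, add_mul, mul_sub, sub_mul, add_div, sub_div,
    neg_div, mul_div_assoc', div_mul_eq_mul_div, Finset.sum_add_distrib, Finset.sum_sub_distrib]
  simp only [mul_comm, mul_left_comm]
  simp only [← Finset.sum_div, ← Finset.mul_sum]
  ring

theorem covD1_GamB_ℓ_add_mul_Kf (hd : MetricData U γ ℓ ℓ2 P n n2) (hU : IsOpen U)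
    (hx : x ∈ U) (Y : Ten m) (c a : Fin m) :
    covD1 (GamB γ ℓ P n Y) ℓ x c a + ℓ2 x * Kf γ ℓ n n2 Y x c a = Ff ℓ x c a + Y x c a := by
  rw [covD1_sub_mul (fun _ _ _ => rfl), hd.covD1_Gam0_ℓ hU hx, hd.sum_ℓ_mul_n hx, Kf]
  ring

theorem sum_mul_curv_GamB (hd : MetricData U γ ℓ ℓ2 P n n2) (hU : IsOpen U) {Y : Ten m}
    (hYsm : SmTen U Y) (hx : x ∈ U) (ω : Fin m → ℝ) (b c d : Fin m) :
    ∑ a, ω a * curv (GamB γ ℓ P n Y) x a b c d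
      = ∑ a, ω a * curv (Gam0 γ ℓ P n) x a b c d
        - (∑ a, ω a * covD1U (Gam0 γ ℓ P n) n x c a) * Y x d b
        + (∑ a, ω a * covD1U (Gam0 γ ℓ P n) n x d a) * Y x c b
        + (∑ a, ω a * n x a) * (covD2 (Gam0 γ ℓ P n) Y x d c b - covD2 (Gam0 γ ℓ P n) Y x c d b
          + Y x d b * ∑ f, Y x c f * n x f - Y x c b * ∑ f, Y x d f * n x f) := by
  have ⟨hγ, hℓ, _, hP, hn, _, hγs, _⟩ := hd
  exact sum_mul_curv_sub_mul (fun _ _ _ _ => rfl) (Gam0_symm hU hγs hx)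
    (fun k i j => SmSc.differentiableAt hU (smSc_Gam0 hU hγ hℓ hP hn k i j) hx)
    (fun k => SmSc.differentiableAt hU (hn k) hx)
    (fun i j => SmSc.differentiableAt hU (hYsm i j) hx) ω b c d

theorem covD2_GamB_Kf (hd : MetricData U γ ℓ ℓ2 P n n2) (hU : IsOpen U) {Y : Ten m}
    (hYsm : SmTen U Y) (hx : x ∈ U) (d b c : Fin m) :
    covD2 (GamB γ ℓ P n Y) (Kf γ ℓ n n2 Y) x d b c
      = pd d n2 x * Y x b c + n2 x * covD2 (Gam0 γ ℓ P n) Y x d b c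
        + covD2 (Gam0 γ ℓ P n) (Uf γ ℓ n n2) x d b c
        + Y x d b * ∑ k, Kf γ ℓ n n2 Y x k c * n x k
        + Y x d c * ∑ k, Kf γ ℓ n n2 Y x b k * n x k := by
  have ⟨hγ, hℓ, _, _, hn, hn2, _⟩ := hd
  rw [covD2_sub_mul (Γ' := GamB γ ℓ P n Y) (fun _ _ _ => rfl),
    covD2_mul_add (K := Kf γ ℓ n n2 Y) (fun _ _ _ => rfl) (SmSc.differentiableAt hU hn2 hx)
      (SmSc.differentiableAt hU (hYsm b c) hx)
      (SmSc.differentiableAt hU (smSc_Uf hU hγ hℓ hn hn2 b c) hx)]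

theorem sum_Kf_mul_n (hd : MetricData U γ ℓ ℓ2 P n n2) (hU : IsOpen U) {Y : Ten m}
    (hYs : ∀ y ∈ U, ∀ a b, Y y a b = Y y b a) (hx : x ∈ U) (i : Fin m) :
    ∑ k, Kf γ ℓ n n2 Y x k i * n x k
      = n2 x * ∑ k, Y x i k * n x k + ∑ k, Uf γ ℓ n n2 x i k * n x k := by
  simp only [Kf, add_mul, Finset.sum_add_distrib, Finset.mul_sum, hYs x hx _ i,
    hd.Uf_symm hU hx _ i, mul_assoc]

end MetricData

end HypData

namespace GaussCodazzi

open HypData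

variable {m : ℕ}

/-- The Gauss-Codazzi quantity `(I)_{bcd}` (= `R(ℓ,e_b,e_c,e_d)` for embedded data). -/
def Idef (γ : Ten m) (ℓ : Vec m) (ℓ2 : Sc m) (P : Ten m) (n : Vec m) (n2 : Sc m)
    (Y : Ten m) (x : Fin m → ℝ) (b c d : Fin m) : ℝ :=
  (∑ a, ℓ x a * curv (GamB γ ℓ P n Y) x a b c d)
  + ℓ2 x * (covD2 (GamB γ ℓ P n Y) (Kf γ ℓ n n2 Y) x d b c
      - covD2 (GamB γ ℓ P n Y) (Kf γ ℓ n n2 Y) x c b d)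
  + Kf γ ℓ n n2 Y x b c * pd d ℓ2 x / 2
  - Kf γ ℓ n n2 Y x b d * pd c ℓ2 x / 2

/-- The Gauss-Codazzi quantity `(II)_{abcd}` (= `R(e_a,e_b,e_c,e_d)` for embedded data). -/
def IIdef (γ : Ten m) (ℓ : Vec m) (ℓ2 : Sc m) (P : Ten m) (n : Vec m) (n2 : Sc m)
    (Y : Ten m) (x : Fin m → ℝ) (a b c d : Fin m) : ℝ :=
  (∑ f, γ x a f * curv (GamB γ ℓ P n Y) x f b c d)
  - Kf γ ℓ n n2 Y x b d * (covD1 (GamB γ ℓ P n Y) ℓ x c a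
      + ℓ2 x * Kf γ ℓ n n2 Y x c a)
  + Kf γ ℓ n n2 Y x b c * (covD1 (GamB γ ℓ P n Y) ℓ x d a
      + ℓ2 x * Kf γ ℓ n n2 Y x d a)
  - ℓ x a * (covD2 (GamB γ ℓ P n Y) (Kf γ ℓ n n2 Y) x c b d
      - covD2 (GamB γ ℓ P n Y) (Kf γ ℓ n n2 Y) x d b c)

variable {U : Set (Fin m → ℝ)} {x : Fin m → ℝ}
  {γ : Ten m} {ℓ : Vec m} {ℓ2 : Sc m} {P : Ten m} {n : Vec m} {n2 : Sc m} {Y : Ten m}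

theorem Idef_eq (hd : MetricData U γ ℓ ℓ2 P n n2) (hU : IsOpen U) (hYsm : SmTen U Y)
    (hYs : ∀ y ∈ U, ∀ a b, Y y a b = Y y b a) (hx : x ∈ U) (b c d : Fin m) :
    Idef γ ℓ ℓ2 P n n2 Y x b c d
      = (∑ a, ℓ x a * curv (Gam0 γ ℓ P n) x a b c d)
        + covD2 (Gam0 γ ℓ P n) Y x d b c - covD2 (Gam0 γ ℓ P n) Y x c b d
        + ℓ2 x * (covD2 (Gam0 γ ℓ P n) (Uf γ ℓ n n2) x d b c
          - covD2 (Gam0 γ ℓ P n) (Uf γ ℓ n n2) x c b d)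
        + (Uf γ ℓ n n2 x b c * pd d ℓ2 x - Uf γ ℓ n n2 x b d * pd c ℓ2 x) / 2
        + Y x b d * ((∑ f, (Ff ℓ x c f + Y x c f) * n x f) + n2 x * pd c ℓ2 x / 2)
        - Y x b c * ((∑ f, (Ff ℓ x d f + Y x d f) * n x f) + n2 x * pd d ℓ2 x / 2) := by
  rw [Idef, hd.sum_mul_curv_GamB hU hYsm hx, hd.covD2_GamB_Kf hU hYsm hx,
    hd.covD2_GamB_Kf hU hYsm hx, hd.sum_ℓ_mul_covD1U_Gam0_n hU hx,
    hd.sum_ℓ_mul_covD1U_Gam0_n hU hx, hd.sum_ℓ_mul_n hx, covD2_symm hU hx hYs d c b,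
    covD2_symm hU hx hYs c d b, hd.sum_Kf_mul_n hU hYs hx c, hd.sum_Kf_mul_n hU hYs hx d,
    hYs x hx d b, hYs x hx c b, hYs x hx d c]
  simp only [Kf, add_mul, Finset.sum_add_distrib]
  ring

theorem IIdef_eq (hd : MetricData U γ ℓ ℓ2 P n n2) (hU : IsOpen U) (hYsm : SmTen U Y)
    (hYs : ∀ y ∈ U, ∀ a b, Y y a b = Y y b a) (hx : x ∈ U) (a b c d : Fin m) :
    IIdef γ ℓ ℓ2 P n n2 Y x a b c d
      = (∑ f, γ x a f * curv (Gam0 γ ℓ P n) x f b c d)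
        + ℓ x a * (covD2 (Gam0 γ ℓ P n) (Uf γ ℓ n n2) x d b c
          - covD2 (Gam0 γ ℓ P n) (Uf γ ℓ n n2) x c b d)
        + Y x b c * Uf γ ℓ n n2 x d a - Y x b d * Uf γ ℓ n n2 x c a
        + Uf γ ℓ n n2 x b c * Y x d a - Uf γ ℓ n n2 x b d * Y x c a
        + n2 x * (Y x b c * Y x d a - Y x b d * Y x c a)
        + Uf γ ℓ n n2 x b c * Ff ℓ x d a
        - Uf γ ℓ n n2 x b d * Ff ℓ x c a := by
  rw [IIdef, hd.sum_mul_curv_GamB hU hYsm hx, hd.covD1_GamB_ℓ_add_mul_Kf hU hx,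
    hd.covD1_GamB_ℓ_add_mul_Kf hU hx, hd.covD2_GamB_Kf hU hYsm hx, hd.covD2_GamB_Kf hU hYsm hx,
    hd.sum_γ_mul_covD1U_Gam0_n hU hx, hd.sum_γ_mul_covD1U_Gam0_n hU hx, hd.sum_γ_mul_n hx,
    covD2_symm hU hx hYs d c b, covD2_symm hU hx hYs c d b, hd.sum_Kf_mul_n hU hYs hx c,
    hd.sum_Kf_mul_n hU hYs hx d, hYs x hx d b, hYs x hx c b, hYs x hx d c]
  simp only [Kf, add_mul, Finset.sum_add_distrib]
  ring

theorem statement13_general (m : ℕ) (U : Set (Fin m → ℝ)) (hU : IsOpen U)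
    (γ : Ten m) (ℓ : Vec m) (ℓ2 : Sc m) (P : Ten m) (n : Vec m) (n2 : Sc m)
    (hdata : MetricData U γ ℓ ℓ2 P n n2)
    (Y : Ten m) (hYsm : SmTen U Y) (hYs : ∀ x ∈ U, ∀ a b, Y x a b = Y x b a) :
    -- (1)
    ((∀ x ∈ U, ∀ b c d,
      Idef γ ℓ ℓ2 P n n2 Y x b c d
        = (∑ a, ℓ x a * curv (Gam0 γ ℓ P n) x a b c d)
          + covD2 (Gam0 γ ℓ P n) Y x d b c - covD2 (Gam0 γ ℓ P n) Y x c b d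
          + ℓ2 x * (covD2 (Gam0 γ ℓ P n) (Uf γ ℓ n n2) x d b c
            - covD2 (Gam0 γ ℓ P n) (Uf γ ℓ n n2) x c b d)
          + (Uf γ ℓ n n2 x b c * pd d ℓ2 x - Uf γ ℓ n n2 x b d * pd c ℓ2 x) / 2
          + Y x b d * ((∑ f, (Ff ℓ x c f + Y x c f) * n x f)
              + n2 x * pd c ℓ2 x / 2)
          - Y x b c * ((∑ f, (Ff ℓ x d f + Y x d f) * n x f)
              + n2 x * pd d ℓ2 x / 2))
    -- (2)
    ∧ (∀ x ∈ U, ∀ a b c d,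
      IIdef γ ℓ ℓ2 P n n2 Y x a b c d
        = (∑ f, γ x a f * curv (Gam0 γ ℓ P n) x f b c d)
          + ℓ x a * (covD2 (Gam0 γ ℓ P n) (Uf γ ℓ n n2) x d b c
            - covD2 (Gam0 γ ℓ P n) (Uf γ ℓ n n2) x c b d)
          + Y x b c * Uf γ ℓ n n2 x d a - Y x b d * Uf γ ℓ n n2 x c a
          + Uf γ ℓ n n2 x b c * Y x d a - Uf γ ℓ n n2 x b d * Y x c a
          + n2 x * (Y x b c * Y x d a - Y x b d * Y x c a)
          + Uf γ ℓ n n2 x b c * Ff ℓ x d a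
          - Uf γ ℓ n n2 x b d * Ff ℓ x c a)) :=
  ⟨fun _ hx b c d => Idef_eq hdata hU hYsm hYs hx b c d,
    fun _ hx a b c d => IIdef_eq hdata hU hYsm hYs hx a b c d⟩

/-- Proposition 5 of the paper (Remark 7), the Gauss-Codazzi
quantities `(I)` and `(II)` rewritten in terms of the metric hypersurface
connection `∇̊`. -/
theorem statement13 (m : ℕ) (hm : 1 ≤ m) (U : Set (Fin m → ℝ)) (hU : IsOpen U)
    (γ : Ten m) (ℓ : Vec m) (ℓ2 : Sc m) (P : Ten m) (n : Vec m) (n2 : Sc m)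
    (hdata : MetricData U γ ℓ ℓ2 P n n2)
    (Y : Ten m) (hYsm : SmTen U Y) (hYs : ∀ x ∈ U, ∀ a b, Y x a b = Y x b a) :
    -- (1)
    ((∀ x ∈ U, ∀ b c d,
      Idef γ ℓ ℓ2 P n n2 Y x b c d
        = (∑ a, ℓ x a * curv (Gam0 γ ℓ P n) x a b c d)
          + covD2 (Gam0 γ ℓ P n) Y x d b c - covD2 (Gam0 γ ℓ P n) Y x c b d
          + ℓ2 x * (covD2 (Gam0 γ ℓ P n) (Uf γ ℓ n n2) x d b c
            - covD2 (Gam0 γ ℓ P n) (Uf γ ℓ n n2) x c b d)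
          + (Uf γ ℓ n n2 x b c * pd d ℓ2 x - Uf γ ℓ n n2 x b d * pd c ℓ2 x) / 2
          + Y x b d * ((∑ f, (Ff ℓ x c f + Y x c f) * n x f)
              + n2 x * pd c ℓ2 x / 2)
          - Y x b c * ((∑ f, (Ff ℓ x d f + Y x d f) * n x f)
              + n2 x * pd d ℓ2 x / 2))
    -- (2)
    ∧ (∀ x ∈ U, ∀ a b c d,
      IIdef γ ℓ ℓ2 P n n2 Y x a b c d
        = (∑ f, γ x a f * curv (Gam0 γ ℓ P n) x f b c d)
          + ℓ x a * (covD2 (Gam0 γ ℓ P n) (Uf γ ℓ n n2) x d b c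
            - covD2 (Gam0 γ ℓ P n) (Uf γ ℓ n n2) x c b d)
          + Y x b c * Uf γ ℓ n n2 x d a - Y x b d * Uf γ ℓ n n2 x c a
          + Uf γ ℓ n n2 x b c * Y x d a - Uf γ ℓ n n2 x b d * Y x c a
          + n2 x * (Y x b c * Y x d a - Y x b d * Y x c a)
          + Uf γ ℓ n n2 x b c * Ff ℓ x d a
          - Uf γ ℓ n n2 x b d * Ff ℓ x c a)) :=
  statement13_general m U hU γ ℓ ℓ2 P n n2 hdata Y hYsm hYs

end GaussCodazzi
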